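/- If G and H are graphs and u, v are distinct vertices of G with N(v) ⊆ N(u), then the inclusion i : G − v ↪ G induces a homotopy equivalence i_H : Hom(G, H) → Hom(G − v, H). -/

import Mathlib

open scoped Topology

/-- A cell of the Lovász `Hom` complex of multihomomorphisms between two graphs,
given by adjacency relations `A` and `B`: a function assigning to each vertex a
nonempty set of vertices such that adjacent vertices get completely adjacent sets. -/
@[ext]
structure HomCell {V W : Type*} (A : V → V → Prop) (B : W → W → Prop) where
  η : V → Set W
  nonempty : ∀ v, (η v).Nonempty
  adj : ∀ ⦃x y⦄, A x y → ∀ a ∈ η x, ∀ b ∈ η y, B a b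

namespace HomCell

variable {U V W : Type*} {A : V → V → Prop} {B : W → W → Prop}

theorem eta_injective : Function.Injective (HomCell.η (A := A) (B := B)) := by
  rintro ⟨f, _, _⟩ ⟨g, _, _⟩ h
  simpa using h

/-- Cells are ordered by pointwise inclusion (the face order of the `Hom` complex). -/
instance : PartialOrder (HomCell A B) := PartialOrder.lift HomCell.η eta_injective

theorem le_def {c d : HomCell A B} : c ≤ d ↔ ∀ v, c.η v ⊆ d.η v := Iff.rfl

noncomputable instance [Finite V] [Finite W] : Fintype (HomCell A B) := by
  classical
  have : Finite (HomCell A B) := Finite.of_injective _ (eta_injective (A := A) (B := B))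
  exact Fintype.ofFinite _

noncomputable instance : DecidableEq (HomCell A B) := Classical.decEq _

/-- Precomposition with a graph homomorphism `φ : (U,A') → (V,A)`: the induced
cellular (monotone) map `Hom(V,W) → Hom(U,W)`; this is the contravariant functoriality
of `Hom(-,H)`. -/
def pull {A' : U → U → Prop} (φ : U → V) (hφ : ∀ ⦃x y⦄, A' x y → A (φ x) (φ y)) :
    HomCell A B →o HomCell A' B where
  toFun c :=
    { η := fun u => c.η (φ u)
      nonempty := fun u => c.nonempty (φ u)
      adj := fun _ _ hxy => c.adj (hφ hxy) }
  monotone' := fun _ _ h u => h (φ u)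

/-- Postcomposition with a graph homomorphism `φ : (V,B) → (W,B')`: the induced
cellular (monotone) map `Hom(U,V) → Hom(U,W)`; this is the covariant functoriality
of `Hom(G,-)`. -/
def push {U₀ V₀ W₀ : Type*} {A₀ : U₀ → U₀ → Prop} {B₀ : V₀ → V₀ → Prop}
    {B₀' : W₀ → W₀ → Prop} (φ : V₀ → W₀)
    (hφ : ∀ ⦃x y⦄, B₀ x y → B₀' (φ x) (φ y)) (c : HomCell A₀ B₀) : HomCell A₀ B₀' where
  η v := φ '' c.η v
  nonempty v := (c.nonempty v).image φ
  adj := by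
    rintro x y hxy a ⟨a', ha', rfl⟩ b ⟨b', hb', rfl⟩
    exact hφ (c.adj hxy a' ha' b' hb')

end HomCell

/-- The geometric realization of the order complex of a preorder `P`:
formal convex combinations supported on finite chains of `P`. -/
def OrderComplex (P : Type*) [Preorder P] : Type _ :=
  { f : P → ℝ // (∀ x, 0 ≤ f x) ∧ HasSum f 1 ∧ IsChain (· ≤ ·) {x | f x ≠ 0} }

instance (P : Type*) [Preorder P] : TopologicalSpace (OrderComplex P) :=
  instTopologicalSpaceSubtype

/-- The topological space underlying the Lovász complex `Hom(G,H)` for graphs given by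
adjacency relations `A`, `B`: the (realization of the) poset of multihomomorphism cells. -/
def HomComplex {V W : Type*} (A : V → V → Prop) (B : W → W → Prop) : Type _ :=
  OrderComplex (HomCell A B)

instance {V W : Type*} (A : V → V → Prop) (B : W → W → Prop) :
    TopologicalSpace (HomComplex A B) := instTopologicalSpaceSubtype

/-- The simplicial map on order complexes induced by a monotone map of posets:
barycentric pushforward of weights. -/
noncomputable def OrderHom.realize {P Q : Type*} [Preorder P] [Preorder Q] [Fintype P]
    [DecidableEq Q] (φ : P →o Q) : C(OrderComplex P, OrderComplex Q) where
  toFun x := by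
    refine ⟨fun q => ∑ p ∈ Finset.univ.filter (fun p => φ p = q), x.1 p, ?_, ?_, ?_⟩
    · intro q
      exact Finset.sum_nonneg fun p _ => x.2.1 p
    · have h1 : ∑ p, x.1 p = 1 := (hasSum_fintype x.1).unique x.2.2.1
      have key : ∀ q ∉ Finset.univ.image φ,
          (∑ p ∈ Finset.univ.filter (fun p => φ p = q), x.1 p) = 0 := by
        intro q hq
        apply Finset.sum_eq_zero
        intro p hp
        simp only [Finset.mem_filter] at hp
        exact absurd (Finset.mem_image.mpr ⟨p, Finset.mem_univ p, hp.2⟩) hq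
      have := hasSum_sum_of_ne_finset_zero (L := SummationFilter.unconditional Q) (s := Finset.univ.image φ)
        (f := fun q => ∑ p ∈ Finset.univ.filter (fun p => φ p = q), x.1 p) key
      have h2 : (∑ q ∈ Finset.univ.image φ,
          ∑ p ∈ Finset.univ.filter (fun p => φ p = q), x.1 p) = ∑ p, x.1 p :=
        Finset.sum_fiberwise_of_maps_to
          (fun p _ => Finset.mem_image_of_mem φ (Finset.mem_univ p)) _
      rwa [h2, h1] at this
    · intro q1 hq1 q2 hq2 hne
      simp only [Set.mem_setOf_eq] at hq1 hq2
      obtain ⟨p1, hp1, hxp1⟩ : ∃ p, φ p = q1 ∧ x.1 p ≠ 0 := by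
        by_contra h
        push_neg at h
        exact hq1 (Finset.sum_eq_zero fun p hp => by
          simp only [Finset.mem_filter] at hp
          exact h p hp.2)
      obtain ⟨p2, hp2, hxp2⟩ : ∃ p, φ p = q2 ∧ x.1 p ≠ 0 := by
        by_contra h
        push_neg at h
        exact hq2 (Finset.sum_eq_zero fun p hp => by
          simp only [Finset.mem_filter] at hp
          exact h p hp.2)
      have hp12 : p1 ≠ p2 := fun h => hne (hp1 ▸ hp2 ▸ h ▸ rfl)
      rcases x.2.2.2 hxp1 hxp2 hp12 with h | h
      · exact Or.inl (hp1 ▸ hp2 ▸ φ.monotone h)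
      · exact Or.inr (hp2 ▸ hp1 ▸ φ.monotone h)
  continuous_toFun := by
    apply Continuous.subtype_mk
    apply continuous_pi
    intro q
    exact continuous_finset_sum _ fun p _ => (continuous_apply p).comp continuous_subtype_val

/-!
The fold `r : G → G - v` sending `v` to `u` is a retraction of the inclusion `i`, so `i_H ∘ r_H`
is the identity of `Hom(G - v, H)`. The other composite precomposes with the endomorphism
`i ∘ r` of `G`, which satisfies `x ~ y → i (r x) ~ y`; hence a cell `c` of `Hom(G, H)` and its
image `c ∘ i ∘ r` both lie below the cell `x ↦ c x ∪ c (i (r x))`. Comparable monotone maps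
`f ≤ g` of posets realize to homotopic maps of order complexes, by a prism homotopy moving the
mass of each chain from `f` to `g` one element at a time, top element first, so that the support
stays a chain.
-/

open Finset

section PushforwardWeight

variable {P Q R : Type*} [Fintype P] [DecidableEq Q]

def pushforwardWeight (f : P → Q) (w : P → ℝ) (q : Q) : ℝ :=
  ∑ p ∈ univ.filter (fun p => f p = q), w p

theorem hasSum_pushforwardWeight (f : P → Q) (w : P → ℝ) :
    HasSum (pushforwardWeight f w) (∑ p, w p) := by
  have hsupp : ∀ q ∉ univ.image f, pushforwardWeight f w q = 0 := fun q hq =>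
    sum_eq_zero fun p hp => absurd (mem_image.2 ⟨p, mem_univ p, (mem_filter.1 hp).2⟩) hq
  have := hasSum_sum_of_ne_finset_zero (L := SummationFilter.unconditional Q) hsupp
  unfold pushforwardWeight at this
  rwa [sum_fiberwise_of_maps_to fun p _ => mem_image_of_mem f (mem_univ p)] at this

theorem exists_ne_zero_of_pushforwardWeight_ne_zero {f : P → Q} {w : P → ℝ} {q : Q}
    (h : pushforwardWeight f w q ≠ 0) : ∃ p, f p = q ∧ w p ≠ 0 := by
  obtain ⟨p, hp, hw⟩ := Finset.exists_ne_zero_of_sum_ne_zero h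
  exact ⟨p, (mem_filter.1 hp).2, hw⟩

@[simp]
theorem pushforwardWeight_zero (f : P → Q) : pushforwardWeight f 0 = 0 := by
  funext q
  simp [pushforwardWeight]

theorem pushforwardWeight_id [DecidableEq P] (w : P → ℝ) : pushforwardWeight id w = w := by
  funext q
  simp [pushforwardWeight, filter_eq']

theorem pushforwardWeight_comp [Fintype Q] [DecidableEq R] (f : P → Q) (g : Q → R)
    (w : P → ℝ) :
    pushforwardWeight (g ∘ f) w = pushforwardWeight g (pushforwardWeight f w) := by
  funext r
  rw [pushforwardWeight, ← sum_fiberwise _ f, pushforwardWeight, sum_filter]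
  refine sum_congr rfl fun q _ => ?_
  split_ifs with hq
  · exact sum_congr (by ext p; simp +contextual [hq]) fun _ _ => rfl
  · refine sum_eq_zero fun p hp => ?_
    simp only [mem_filter, mem_univ, true_and, Function.comp_apply] at hp
    exact absurd (hp.2 ▸ hp.1) hq

end PushforwardWeight

namespace OrderHom

variable {P Q R : Type*} [Preorder P] [Preorder Q] [Preorder R] [Fintype P]

theorem coe_realize_apply [DecidableEq Q] (φ : P →o Q) (x : OrderComplex P) :
    (φ.realize x).1 = pushforwardWeight φ x.1 :=
  rfl

theorem realize_id [DecidableEq P] : (OrderHom.id : P →o P).realize = ContinuousMap.id _ := by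
  ext x : 1
  exact Subtype.ext (pushforwardWeight_id x.1)

theorem realize_comp [Fintype Q] [DecidableEq Q] [DecidableEq R] (φ : P →o Q) (ψ : Q →o R) :
    (ψ.comp φ).realize = ψ.realize.comp φ.realize := by
  ext x : 1
  exact Subtype.ext (pushforwardWeight_comp φ ψ x.1)

end OrderHom

section Prism

variable {P Q : Type*} [Preorder P] [Fintype P]

open Classical in
noncomputable def massAbove (x : P → ℝ) (p : P) : ℝ :=
  ∑ q ∈ univ.filter (fun q => p < q), x q

/-- The mass of `p` moved by time `t`: the elements of a chain are moved one after another,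
from the top down. -/
noncomputable def movedMass (x : P → ℝ) (t : ℝ) (p : P) : ℝ :=
  min (x p) (max 0 (t - massAbove x p))

variable {x : P → ℝ}

theorem movedMass_nonneg (hx : ∀ p, 0 ≤ x p) (t : ℝ) (p : P) : 0 ≤ movedMass x t p :=
  le_min (hx p) (le_max_left _ _)

theorem movedMass_le (t : ℝ) (p : P) : movedMass x t p ≤ x p :=
  min_le_left _ _

theorem movedMass_zero (hx : ∀ p, 0 ≤ x p) (p : P) : movedMass x 0 p = 0 := by
  have : 0 ≤ massAbove x p := sum_nonneg fun q _ => hx q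
  rw [movedMass, max_eq_left (by linarith), min_eq_right (hx p)]

open Classical in
theorem add_massAbove_le (hx : ∀ p, 0 ≤ x p) {p : P} {s : Finset P} (hp : p ∈ s)
    (hs : ∀ q, p < q → q ∈ s) : x p + massAbove x p ≤ ∑ q ∈ s, x q := by
  rw [massAbove, ← sum_insert (by simp)]
  refine sum_le_sum_of_subset_of_nonneg ?_ fun q _ _ => hx q
  intro q hq
  rcases mem_insert.1 hq with rfl | hq
  exacts [hp, hs q (mem_filter.1 hq).2]

theorem movedMass_one (hx : ∀ p, 0 ≤ x p) (hsum : ∑ p, x p = 1) (p : P) :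
    movedMass x 1 p = x p := by
  have := add_massAbove_le hx (mem_univ p) fun q _ => mem_univ q
  exact min_eq_left (le_max_of_le_right (by linarith))

open Classical in
theorem movedMass_eq_of_lt (hx : ∀ p, 0 ≤ x p) {t : ℝ} {p' p : P} (hlt : p' < p)
    (hmoved : movedMass x t p' ≠ 0) : movedMass x t p = x p := by
  have hmoving : massAbove x p' < t := by
    by_contra! h
    exact hmoved (by rw [movedMass, max_eq_left (by linarith), min_eq_right (hx p')])
  have := add_massAbove_le hx (s := univ.filter (fun q => p' < q))
    (mem_filter.2 ⟨mem_univ p, hlt⟩) fun q hq => mem_filter.2 ⟨mem_univ q, hlt.trans hq⟩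
  exact min_eq_left (le_max_of_le_right (by rw [massAbove] at hmoving; linarith))

variable [DecidableEq Q]

noncomputable def prismWeight (f g : P → Q) (x : P → ℝ) (t : ℝ) : Q → ℝ :=
  pushforwardWeight f (fun p => x p - movedMass x t p) + pushforwardWeight g (movedMass x t)

theorem isChain_prismWeight_support [Preorder Q] {f g : P →o Q} (hfg : f ≤ g)
    (hx : ∀ p, 0 ≤ x p) (hchain : IsChain (· ≤ ·) {p | x p ≠ 0}) (t : ℝ) :
    IsChain (· ≤ ·) {q | prismWeight f g x t q ≠ 0} := by
  set S := {p | x p - movedMass x t p ≠ 0}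
  set T := {p | movedMass x t p ≠ 0}
  have hT : T ⊆ {p | x p ≠ 0} := fun p hp h0 =>
    hp (le_antisymm (h0 ▸ movedMass_le t p) (movedMass_nonneg hx t p))
  have hS : S ⊆ {p | x p ≠ 0} := fun p hp h0 => by
    have : movedMass x t p = 0 := le_antisymm (h0 ▸ movedMass_le t p) (movedMass_nonneg hx t p)
    exact hp (by rw [h0, this, sub_zero])
  have hsupp : {q | prismWeight f g x t q ≠ 0} ⊆ f '' S ∪ g '' T := by
    intro q hq
    by_cases h : pushforwardWeight f (fun p => x p - movedMass x t p) q = 0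
    · rw [Set.mem_ofPred, prismWeight, Pi.add_apply, h, zero_add] at hq
      obtain ⟨p, rfl, hp⟩ := exists_ne_zero_of_pushforwardWeight_ne_zero hq
      exact Or.inr ⟨p, hp, rfl⟩
    · obtain ⟨p, rfl, hp⟩ := exists_ne_zero_of_pushforwardWeight_ne_zero h
      exact Or.inl ⟨p, hp, rfl⟩
  refine (isChain_union.2 ⟨f.monotone.isChain_image (hchain.mono hS),
    g.monotone.isChain_image (hchain.mono hT), ?_⟩).mono hsupp
  rintro _ ⟨p₁, hp₁, rfl⟩ _ ⟨p₂, hp₂, rfl⟩ -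
  have hle : p₁ ≤ p₂ := by
    by_contra hle
    have hne : p₁ ≠ p₂ := by rintro rfl; exact hle le_rfl
    have hlt : p₂ < p₁ :=
      lt_of_le_not_ge ((hchain (hS hp₁) (hT hp₂) hne).resolve_left hle) hle
    exact hp₁ (by rw [movedMass_eq_of_lt hx hlt hp₂, sub_self])
  exact Or.inl ((f.mono hle).trans (hfg p₂))

end Prism

theorem OrderHom.realize_homotopic_of_le {P Q : Type*} [Preorder P] [Preorder Q] [Fintype P]
    [DecidableEq Q] {f g : P →o Q} (hfg : f ≤ g) : f.realize.Homotopic g.realize := by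
  refine ⟨{
    toFun := fun s => ⟨prismWeight f g s.2.1 s.1, fun q => ?_, ?_,
      isChain_prismWeight_support hfg s.2.2.1 s.2.2.2.2 s.1⟩
    continuous_toFun := ?_
    map_zero_left := fun x => Subtype.ext ?_
    map_one_left := fun x => Subtype.ext ?_ }⟩
  · exact add_nonneg (sum_nonneg fun p _ => sub_nonneg.2 (movedMass_le _ p))
      (sum_nonneg fun p _ => movedMass_nonneg s.2.2.1 _ p)
  · have := (hasSum_pushforwardWeight f fun p => s.2.1 p - movedMass s.2.1 s.1 p).add
      (hasSum_pushforwardWeight g (movedMass s.2.1 s.1))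
    rwa [← sum_add_distrib, sum_congr rfl fun p _ => sub_add_cancel _ _,
      (hasSum_fintype s.2.1).unique s.2.2.2.1] at this
  · have hx : ∀ p, Continuous fun s : unitInterval × OrderComplex P => s.2.1 p :=
      fun p => (continuous_apply p).comp (continuous_subtype_val.comp continuous_snd)
    have hmoved : ∀ p,
        Continuous fun s : unitInterval × OrderComplex P => movedMass s.2.1 s.1 p :=
      fun p => (hx p).min (continuous_const.max ((continuous_subtype_val.comp continuous_fst).sub
        (continuous_finsetSum _ fun q _ => hx q)))
    refine Continuous.subtype_mk (continuous_pi fun q => ?_) _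
    exact (continuous_finsetSum _ fun p _ => (hx p).sub (hmoved p)).add
      (continuous_finsetSum _ fun p _ => hmoved p)
  · have hmoved : movedMass x.1 0 = 0 := funext (movedMass_zero x.2.1)
    simp [prismWeight, hmoved, OrderHom.coe_realize_apply]
  · have hmoved : movedMass x.1 1 = x.1 :=
      funext (movedMass_one x.2.1 ((hasSum_fintype x.1).unique x.2.2.1))
    simp [prismWeight, hmoved, OrderHom.coe_realize_apply, ← Pi.zero_def]

namespace HomCell

variable {T U V W : Type*} {A : V → V → Prop} {B : W → W → Prop}

theorem pull_comp_pull {A' : U → U → Prop} {A'' : T → T → Prop} (φ : U → V)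
    (hφ : ∀ ⦃x y⦄, A' x y → A (φ x) (φ y)) (ψ : T → U)
    (hψ : ∀ ⦃x y⦄, A'' x y → A' (ψ x) (ψ y)) :
    (pull (B := B) ψ hψ).comp (pull φ hφ) = pull (φ ∘ ψ) fun _ _ h => hφ (hψ h) :=
  rfl

theorem pull_eq_id {φ : V → V} (h : ∀ x, φ x = x)
    (hφ : ∀ ⦃x y⦄, A x y → A (φ x) (φ y)) :
    pull (B := B) φ hφ = OrderHom.id := by
  ext c : 3
  simp [pull, h]

variable [Std.Symm A]

def supPull (φ : V → V) (hφ : ∀ ⦃x y⦄, A x y → A (φ x) y) :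
    HomCell A B →o HomCell A B where
  toFun c :=
    { η := fun x => c.η x ∪ c.η (φ x)
      nonempty := fun x => (c.nonempty x).mono Set.subset_union_left
      adj := by
        intro x y hxy a ha b hb
        have hxφy : A x (φ y) := symm_of A (hφ (symm_of A hxy))
        rcases ha with ha | ha <;> rcases hb with hb | hb
        exacts [c.adj hxy a ha b hb, c.adj hxφy a ha b hb, c.adj (hφ hxy) a ha b hb,
          c.adj (hφ hxφy) a ha b hb] }
  monotone' _ _ hcd x := Set.union_subset_union (hcd x) (hcd (φ x))

theorem realize_pull_homotopic_id [Finite V] [Finite W] (φ : V → V)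
    (hφ : ∀ ⦃x y⦄, A x y → A (φ x) y) :
    (pull (B := B) φ fun _ _ h => symm_of A (hφ (symm_of A (hφ h)))).realize.Homotopic
      (ContinuousMap.id _) := by
  rw [← OrderHom.realize_id]
  refine (OrderHom.realize_homotopic_of_le ?_).trans
    (OrderHom.realize_homotopic_of_le (g := supPull φ hφ) ?_).symm
  · exact fun c x => Set.subset_union_right
  · exact fun c x => Set.subset_union_left

noncomputable def pullHomotopyEquivOfRetraction {A' : U → U → Prop} [Finite U] [Finite V]
    [Finite W] (i : U → V) (hi : ∀ a b, A' a b ↔ A (i a) (i b)) (r : V → U)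
    (hri : ∀ a, r (i a) = a) (hir : ∀ ⦃x y⦄, A x y → A (i (r x)) y) :
    ContinuousMap.HomotopyEquiv (HomComplex A B) (HomComplex A' B) where
  toFun := (pull i fun a b => (hi a b).1).realize
  invFun := (pull (A' := A) r fun _ _ h =>
    (hi _ _).2 (symm_of A (hir (symm_of A (hir h))))).realize
  left_inv := by
    change ((pull r _).realize.comp (pull i _).realize).Homotopic (.id (OrderComplex _))
    rw [← OrderHom.realize_comp, pull_comp_pull]
    exact realize_pull_homotopic_id (i ∘ r) hir
  right_inv := by
    change ((pull i _).realize.comp (pull r _).realize).Homotopic (.id (OrderComplex _))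
    rw [← OrderHom.realize_comp, pull_comp_pull, pull_eq_id (φ := r ∘ i) hri,
      OrderHom.realize_id]

end HomCell

/-- **The folding lemma** (Babson–Kozlov): if `u ≠ v` are vertices of `G` with
`N(v) ⊆ N(u)`, then the inclusion `G - v ↪ G` induces a homotopy equivalence
`Hom(G,H) → Hom(G - v, H)`. -/
theorem fold_homotopyEquiv {V W : Type*} [Fintype V] [Fintype W] (G : SimpleGraph V)
    (H : SimpleGraph W) (u v : V) (huv : u ≠ v) (hN : ∀ w, G.Adj v w → G.Adj u w) :
    ∃ e : ContinuousMap.HomotopyEquiv (HomComplex G.Adj H.Adj)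
        (HomComplex (G.induce {x | x ≠ v}).Adj H.Adj),
      ⇑e.toFun = ⇑(HomCell.pull (B := H.Adj) (Subtype.val : {x | x ≠ v} → V)
        (fun _ _ h => h)).realize := by
  classical
  let fold : V → {x | x ≠ v} := fun x => if hx : x = v then ⟨u, huv⟩ else ⟨x, hx⟩
  have fold_val : ∀ x : {x | x ≠ v}, fold x = x := fun x => dif_neg x.2
  have adj_fold : ∀ ⦃x y⦄, G.Adj x y → G.Adj (fold x) y := by
    intro x y hxy
    by_cases hx : x = v
    · subst hx; simpa [fold] using hN y hxy
    · simpa [fold, hx] using hxy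
  have : Std.Symm G.Adj := G.symm
  exact ⟨HomCell.pullHomotopyEquivOfRetraction Subtype.val (fun _ _ => Iff.rfl) fold
    fold_val adj_fold, rfl⟩
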